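/- arXiv:1811.06416 — 5 statements merged into one kernel-verified Lean document; each statement's English description precedes it below -/
import Mathlib

section
/- Let x₀ > 0 and N ∈ ℕ*. The function η(x) = 1 − ((x−x₀)/(x+x₀))^{2N}, defined for x > 0, satisfies η(x₀)=1, η^{(k)}(x₀)=0 for 1 ≤ k ≤ 2N−1, |η(x)| < 1 for all x > 0 with x ≠ x₀, and η^{(2N)}(x₀) = −(2N)!/(2x₀)^{2N} < 0. -/
/-!
Write `η x = 1 - (x - x₀) ^ (2N) * g x` with `g x = (x + x₀) ^ (-2N)`, smooth near `x₀`. By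
Leibniz' rule, at `x₀` only the term differentiating `(x - x₀) ^ (2N)` exactly `2N` times
survives, so the derivatives of order `< 2N` vanish and the `2N`-th one is `-(2N)! g x₀`.
The bound `|η x| < 1` holds because `|(x - x₀) / (x + x₀)| < 1` for positive `x, x₀` and the
exponent is even and positive.
-/

open Nat

section SubPowMul

variable {𝕜 : Type*} [NontriviallyNormedField 𝕜] [CharZero 𝕜]

theorem iteratedDeriv_sub_pow_self (k n : ℕ) (a : 𝕜) :
    iteratedDeriv k (fun y => (y - a) ^ n) a = if k = n then (n ! : 𝕜) else 0 := by
  simp only [iteratedDeriv_comp_sub_const (f := (· ^ n)), sub_self, iteratedDeriv_fun_pow_zero]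
  split_ifs <;> simp

theorem iteratedDeriv_sub_pow_mul_of_le {k n : ℕ} (hkn : k ≤ n) {g : 𝕜 → 𝕜} {a : 𝕜}
    (hg : ContDiffAt 𝕜 k g a) :
    iteratedDeriv k (fun y => (y - a) ^ n * g y) a = if k = n then (n ! : 𝕜) * g a else 0 := by
  rw [iteratedDeriv_fun_mul (by fun_prop) hg]
  simp only [iteratedDeriv_sub_pow_self, mul_ite, mul_zero, ite_mul, zero_mul,
    Finset.sum_ite_eq', Finset.mem_range]
  by_cases hk : k = n
  · subst hk
    simp
  · rw [if_neg (by omega), if_neg hk]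

end SubPowMul

theorem abs_sub_div_add_lt_one {x y : ℝ} (hx : 0 < x) (hy : 0 < y) : |(x - y) / (x + y)| < 1 := by
  rw [abs_div, abs_of_pos (by linarith : 0 < x + y), div_lt_one (by linarith), abs_lt]
  constructor <;> linarith

theorem abs_one_sub_pow_lt_one {u : ℝ} (hu0 : u ≠ 0) (hu1 : |u| < 1) {m : ℕ} (hm : Even m)
    (hm0 : m ≠ 0) : |1 - u ^ m| < 1 := by
  have hpos : 0 < u ^ m := hm.pow_pos hu0
  have hlt : u ^ m < 1 := by
    rw [← hm.pow_abs]; exact pow_lt_one₀ (abs_nonneg u) hu1 hm0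
  rw [abs_lt]; constructor <;> linarith

/-- The precertificate `η(x) = 1 - ((x-x₀)/(x+x₀))^(2N)` for the unnormalized
Laplace transform is (2N-1)-nondegenerate. -/
theorem stmt3 (N : ℕ) (hN : 0 < N) (x₀ : ℝ) (hx₀ : 0 < x₀)
    (η : ℝ → ℝ) (hη : ∀ x, η x = 1 - ((x - x₀) / (x + x₀)) ^ (2 * N)) :
    η x₀ = 1 ∧
    (∀ k, 1 ≤ k → k ≤ 2 * N - 1 → iteratedDerivWithin k η (Set.Ioi 0) x₀ = 0) ∧
    (∀ x : ℝ, 0 < x → x ≠ x₀ → |η x| < 1) ∧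
    iteratedDerivWithin (2 * N) η (Set.Ioi 0) x₀ =
      -(Nat.factorial (2 * N) : ℝ) / (2 * x₀) ^ (2 * N) ∧
    iteratedDerivWithin (2 * N) η (Set.Ioi 0) x₀ < 0 := by
  set g : ℝ → ℝ := fun x => ((x + x₀) ^ (2 * N))⁻¹
  have hη_eq : η = fun x => 1 - (x - x₀) ^ (2 * N) * g x := by
    funext x
    rw [hη, div_pow, div_eq_mul_inv]
  have hg : ContDiffAt ℝ ⊤ g x₀ :=
    ((contDiffAt_id.add contDiffAt_const).pow _).inv (by positivity)
  have hderiv : ∀ k, 0 < k → k ≤ 2 * N → iteratedDerivWithin k η (Set.Ioi 0) x₀ =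
      if k = 2 * N then -((2 * N)! * g x₀) else 0 := by
    intro k hk hkN
    rw [iteratedDerivWithin_of_isOpen isOpen_Ioi hx₀, hη_eq, iteratedDeriv_const_sub hk,
      iteratedDeriv_neg, iteratedDeriv_sub_pow_mul_of_le hkN (hg.of_le le_top)]
    split_ifs <;> simp
  have htop : iteratedDerivWithin (2 * N) η (Set.Ioi 0) x₀ =
      -(Nat.factorial (2 * N) : ℝ) / (2 * x₀) ^ (2 * N) := by
    rw [hderiv _ (by omega) le_rfl, if_pos rfl, neg_div, div_eq_mul_inv, two_mul x₀]
  refine ⟨by simp [hη, hN.ne'], fun k hk1 hk2 => ?_, fun x hx hne => ?_, htop, ?_⟩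
  · rw [hderiv k hk1 (by omega), if_neg (by omega)]
  · rw [hη]
    exact abs_one_sub_pow_lt_one (div_ne_zero (sub_ne_zero.mpr hne) (by positivity))
      (abs_sub_div_add_lt_one hx hx₀) (even_two_mul N) (by omega)
  · rw [htop, neg_div]
    exact neg_neg_of_pos (by positivity)
end

section
/- Let x₀ > 0 and N ∈ ℕ*. The function η(x) = (2√(x x₀)/(x+x₀)) · Σ_{k=0}^{N−1} ((2k)!/(2^{2k}(k!)²)) ((x−x₀)/(x+x₀))^{2k}, defined for x > 0, satisfies η(x₀)=1 and η^{(k)}(x₀)=0 for 1 ≤ k ≤ 2N−1. -/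
/-!
With `t = (x - x₀) / (x + x₀)` one has `(2 √(x x₀) / (x + x₀))² = 1 - t²`, so `η = √(1 - t²) P(t²)`
where `P` is the truncation below degree `N` of the binomial series
`(1 - u)^(-1/2) = ∑ multichoose (1/2) k uᵏ`, and `multichoose (1/2) k = (2k)! / (4ᵏ (k!)²)`.
By Chu–Vandermonde the square of this series is `(1 - u)⁻¹`, hence `(1 - u) P(u)² ≡ 1 mod u^N`
and `η² - 1 = (x - x₀)^(2N) h` with `h` smooth on `(0, ∞)`. As `η ≥ 0`, also
`η - 1 = (x - x₀)^(2N) h / (η + 1)`, whose derivatives of order `1, …, 2N - 1` vanish at `x₀`.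
-/

open Finset Polynomial
open scoped Nat ContDiff

theorem Ring.multichoose_add {R : Type*} [CommRing R] [BinomialRing R] (r s : R) (n : ℕ) :
    multichoose (r + s) n = ∑ ij ∈ antidiagonal n, multichoose r ij.1 * multichoose s ij.2 := by
  have h := add_choose_eq n (Commute.all (-r) (-s))
  rw [← neg_add, choose_neg', ← sum_congr rfl fun ij hij => by
    rw [choose_neg', choose_neg', smul_mul_smul_comm, ← Int.negOnePow_add, ← Nat.cast_add,
      mem_antidiagonal.mp hij], ← smul_sum] at h
  exact MulAction.injective _ h

lemma ascPochhammer_eval_half (k : ℕ) :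
    (ascPochhammer ℝ k).eval (1 / 2) = (2 * k)! / (2 ^ (2 * k) * k !) := by
  induction k with
  | zero => simp
  | succ k ih =>
    rw [ascPochhammer_succ_eval, ih, Nat.mul_succ, Nat.factorial_succ, Nat.factorial_succ,
      Nat.factorial_succ]
    push_cast
    field_simp
    ring

lemma Ring.multichoose_half (k : ℕ) :
    multichoose (1 / 2 : ℝ) k = (2 * k)! / (2 ^ (2 * k) * (k ! : ℝ) ^ 2) := by
  have h := factorial_nsmul_multichoose_eq_ascPochhammer (1 / 2 : ℝ) k
  rw [ascPochhammer_smeval_eq_eval, ascPochhammer_eval_half, nsmul_eq_mul] at h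
  have hk : (k ! : ℝ) ≠ 0 := by positivity
  field_simp at h ⊢
  linear_combination h

@[fun_prop]
lemma Polynomial.contDiff_eval {𝕜 : Type*} [NontriviallyNormedField 𝕜] (p : 𝕜[X])
    (n : WithTop ℕ∞) : ContDiff 𝕜 n fun x => p.eval x := by
  simpa using p.contDiff_aeval (𝕜 := 𝕜) n

/-- The truncation below degree `N` of the binomial series of `(1 - X)^(-1/2)`. -/
noncomputable def truncInvSqrtOneSub (N : ℕ) : ℝ[X] :=
  ∑ k ∈ range N, C (Ring.multichoose (1 / 2 : ℝ) k) * X ^ k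

lemma coeff_truncInvSqrtOneSub {N k : ℕ} (hk : k < N) :
    (truncInvSqrtOneSub N).coeff k = Ring.multichoose (1 / 2 : ℝ) k := by
  simp [truncInvSqrtOneSub, coeff_X_pow, hk]

lemma eval_truncInvSqrtOneSub_nonneg (N : ℕ) {u : ℝ} (hu : 0 ≤ u) :
    0 ≤ (truncInvSqrtOneSub N).eval u := by
  rw [truncInvSqrtOneSub, eval_finsetSum]
  refine sum_nonneg fun k _ => ?_
  rw [eval_mul, eval_C, eval_pow, eval_X, Ring.multichoose_half]
  positivity

lemma X_pow_dvd_truncInvSqrtOneSub_sq_sub (N : ℕ) :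
    X ^ N ∣ truncInvSqrtOneSub N ^ 2 - ∑ k ∈ range N, X ^ k := by
  refine X_pow_dvd_iff.mpr fun d hd => ?_
  have hsq : (truncInvSqrtOneSub N ^ 2).coeff d = 1 := by
    rw [sq, coeff_mul, ← Ring.multichoose_one (R := ℝ) d, ← add_halves (1 : ℝ),
      Ring.multichoose_add]
    refine sum_congr rfl fun ij hij => ?_
    have hij := mem_antidiagonal.mp hij
    rw [coeff_truncInvSqrtOneSub (by omega), coeff_truncInvSqrtOneSub (by omega)]
  simp [hsq, coeff_X_pow, hd]

lemma X_pow_dvd_one_sub_X_mul_truncInvSqrtOneSub_sq_sub_one (N : ℕ) :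
    X ^ N ∣ (1 - X) * truncInvSqrtOneSub N ^ 2 - 1 := by
  have h := (X_pow_dvd_truncInvSqrtOneSub_sq_sub N).mul_left (1 - X)
  rw [mul_sub, mul_neg_geom_sum] at h
  have h' := h.sub (dvd_refl (X ^ N : ℝ[X]))
  rwa [sub_sub, sub_add_cancel] at h'

lemma iteratedDerivWithin_sub_pow_mul_eq_zero {𝕜 : Type*} [NontriviallyNormedField 𝕜]
    {s : Set 𝕜} {x₀ : 𝕜} (hs : UniqueDiffOn 𝕜 s) (hx₀ : x₀ ∈ s) {g : 𝕜 → 𝕜} {k m : ℕ}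
    (hg : ContDiffWithinAt 𝕜 k g s x₀) (hkm : k < m) :
    iteratedDerivWithin k (fun x => (x - x₀) ^ m * g x) s x₀ = 0 := by
  rw [show (fun x => (x - x₀) ^ m * g x) = (fun x => (x - x₀) ^ m) * g from rfl,
    iteratedDerivWithin_mul hx₀ hs (by fun_prop) hg]
  refine sum_eq_zero fun i hi => ?_
  have hi : i < m := by have := mem_range.mp hi; omega
  rw [iteratedDerivWithin_eq_iteratedDeriv hs (by fun_prop) hx₀,
    iteratedDeriv_comp_sub_const (f := (· ^ m))]
  simp [iteratedDeriv_pow, zero_pow (Nat.sub_ne_zero_of_lt hi)]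

lemma iteratedDerivWithin_eq_zero_of_sq_sub_one_eq {s : Set ℝ} {x₀ : ℝ} (hs : UniqueDiffOn ℝ s)
    (hx₀ : x₀ ∈ s) {f h : ℝ → ℝ} {k m : ℕ} (hf : ContDiffOn ℝ k f s) (hh : ContDiffOn ℝ k h s)
    (hf_nonneg : ∀ x ∈ s, 0 ≤ f x) (hfh : ∀ x ∈ s, f x ^ 2 - 1 = (x - x₀) ^ m * h x)
    (hk : 0 < k) (hkm : k < m) :
    iteratedDerivWithin k f s x₀ = 0 := by
  have hf_add_one : ∀ x ∈ s, f x + 1 ≠ 0 := fun x hx => by linarith [hf_nonneg x hx]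
  have hf_eq : Set.EqOn f (fun x => 1 + (x - x₀) ^ m * (h x / (f x + 1))) s := fun x hx => by
    dsimp only
    rw [← mul_div_assoc, ← hfh x hx]
    field_simp [hf_add_one x hx]
    ring
  rw [iteratedDerivWithin_congr hf_eq hx₀, iteratedDerivWithin_const_add hk]
  exact iteratedDerivWithin_sub_pow_mul_eq_zero hs hx₀
    ((hh.div (hf.add contDiffOn_const) hf_add_one).contDiffWithinAt hx₀) hkm

lemma sq_two_mul_sqrt_mul_div_add {x y : ℝ} (hx : 0 ≤ x) (hy : 0 ≤ y) (hxy : x + y ≠ 0) :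
    (2 * √(x * y) / (x + y)) ^ 2 = 1 - ((x - y) / (x + y)) ^ 2 := by
  rw [div_pow, mul_pow, Real.sq_sqrt (mul_nonneg hx hy)]
  field_simp
  ring

noncomputable def laplacePrecertificate (N : ℕ) (x₀ x : ℝ) : ℝ :=
  2 * √(x * x₀) / (x + x₀) * (truncInvSqrtOneSub N).eval (((x - x₀) / (x + x₀)) ^ 2)

section laplacePrecertificate

variable {N : ℕ} {x₀ : ℝ}

lemma laplacePrecertificate_self (hN : 0 < N) (hx₀ : 0 < x₀) :
    laplacePrecertificate N x₀ x₀ = 1 := by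
  rw [laplacePrecertificate, sub_self, zero_div, sq, zero_mul, ← coeff_zero_eq_eval_zero,
    coeff_truncInvSqrtOneSub hN, Ring.multichoose_zero_right, Real.sqrt_mul_self hx₀.le]
  field_simp
  ring

lemma laplacePrecertificate_nonneg (hx₀ : 0 ≤ x₀) {x : ℝ} (hx : 0 ≤ x) :
    0 ≤ laplacePrecertificate N x₀ x :=
  mul_nonneg (by positivity) (eval_truncInvSqrtOneSub_nonneg N (sq_nonneg _))

lemma contDiffOn_laplacePrecertificate (hx₀ : 0 < x₀) {n : WithTop ℕ∞} :
    ContDiffOn ℝ n (laplacePrecertificate N x₀) (Set.Ioi 0) := by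
  intro x (hx : 0 < x)
  have hden : x + x₀ ≠ 0 := by positivity
  have hprod : x * x₀ ≠ 0 := by positivity
  refine ContDiffAt.contDiffWithinAt ?_
  unfold laplacePrecertificate
  fun_prop (disch := assumption)

lemma laplacePrecertificate_sq_sub_one (hx₀ : 0 < x₀) :
    ∃ h : ℝ → ℝ, ContDiffOn ℝ ∞ h (Set.Ioi 0) ∧
      ∀ x ∈ Set.Ioi 0, laplacePrecertificate N x₀ x ^ 2 - 1 = (x - x₀) ^ (2 * N) * h x := by
  obtain ⟨R, hR⟩ := X_pow_dvd_one_sub_X_mul_truncInvSqrtOneSub_sq_sub_one N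
  have hden : ∀ x ∈ Set.Ioi (0 : ℝ), x + x₀ ≠ 0 := fun x (hx : 0 < x) => by positivity
  refine ⟨fun x => R.eval (((x - x₀) / (x + x₀)) ^ 2) / (x + x₀) ^ (2 * N), ?_, fun x hx => ?_⟩
  · intro x hx
    have hden_x := hden x hx
    have hden_pow := pow_ne_zero (2 * N) hden_x
    exact ContDiffAt.contDiffWithinAt (by fun_prop (disch := assumption))
  · have hR_eval := congrArg (eval (((x - x₀) / (x + x₀)) ^ 2)) hR
    simp only [eval_sub, eval_mul, eval_one, eval_pow, eval_X] at hR_eval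
    rw [laplacePrecertificate, mul_pow, sq_two_mul_sqrt_mul_div_add hx.le hx₀.le (hden x hx),
      hR_eval, ← pow_mul, div_pow]
    field_simp [hden x hx]

end laplacePrecertificate

/-- The precertificate for the L²-normalized Laplace kernel takes value 1 at `x₀`
and has vanishing derivatives of orders `1,…,2N-1` there. -/
theorem stmt4 (N : ℕ) (hN : 0 < N) (x₀ : ℝ) (hx₀ : 0 < x₀)
    (η : ℝ → ℝ)
    (hη : ∀ x, η x = (2 * Real.sqrt (x * x₀) / (x + x₀)) *
      ∑ k ∈ Finset.range N,
        ((Nat.factorial (2 * k) : ℝ) / (2 ^ (2 * k) * (Nat.factorial k : ℝ) ^ 2)) *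
          ((x - x₀) / (x + x₀)) ^ (2 * k)) :
    η x₀ = 1 ∧
    ∀ k, 1 ≤ k → k ≤ 2 * N - 1 → iteratedDerivWithin k η (Set.Ioi 0) x₀ = 0 := by
  have hη_eq : η = laplacePrecertificate N x₀ := funext fun x => by
    rw [hη, laplacePrecertificate, truncInvSqrtOneSub, eval_finsetSum]
    congr 1
    refine sum_congr rfl fun k _ => ?_
    rw [eval_mul, eval_C, eval_pow, eval_X, Ring.multichoose_half, ← pow_mul]
  subst hη_eq
  refine ⟨laplacePrecertificate_self hN hx₀, fun k hk₁ hk₂ => ?_⟩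
  obtain ⟨h, hh, hsq⟩ := laplacePrecertificate_sq_sub_one (N := N) hx₀
  exact iteratedDerivWithin_eq_zero_of_sq_sub_one_eq (uniqueDiffOn_Ioi 0) hx₀
    (contDiffOn_laplacePrecertificate hx₀) (hh.of_le (mod_cast le_top))
    (fun x hx => laplacePrecertificate_nonneg hx₀.le hx.le) hsq (by omega) (by omega)
end

section
/- Let x₀ > 0 and N ∈ ℕ*. The function η(x) = (2√(x x₀)/(x+x₀)) · Σ_{k=0}^{N−1} ((2k)!/(2^{2k}(k!)²)) ((x−x₀)/(x+x₀))^{2k} satisfies |η(x)| < 1 for all x > 0 with x ≠ x₀. -/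
/-!
With `z = (x - x₀)/(x + x₀)` and `t = z²`, one has `2√(x x₀)/(x + x₀) = √(1 - t)`, so
`η x = √(1 - t) · A` with `A = ∑_{k<N} c_k t^k`, where `c_k = (2k)!/(4^k (k!)²)` are the
coefficients of `(1 - t)^(-1/2)`. Squaring that series gives `1/(1 - t)`, i.e. the Cauchy
convolution of `c` with itself is identically `1`. Hence `A² ≤ ∑_{m<2N} t^m`, and
`(1 - t) A² ≤ 1 - t^(2N) < 1` for `0 < t < 1`.
-/

open Finset

noncomputable def invSqrtCoeff (k : ℕ) : ℝ :=
  (Nat.factorial (2 * k) : ℝ) / (2 ^ (2 * k) * (Nat.factorial k : ℝ) ^ 2)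

namespace invSqrtCoeff

lemma pos (k : ℕ) : 0 < invSqrtCoeff k := by
  unfold invSqrtCoeff
  positivity

@[simp]
lemma zero : invSqrtCoeff 0 = 1 := by
  simp [invSqrtCoeff]

lemma two_mul_succ_mul_succ (k : ℕ) :
    2 * ((k : ℝ) + 1) * invSqrtCoeff (k + 1) = (2 * k + 1) * invSqrtCoeff k := by
  have hfact : (Nat.factorial (2 * (k + 1)) : ℝ) = (2 * k + 2) * (2 * k + 1) * (2 * k).factorial := by
    rw [show 2 * (k + 1) = 2 * k + 1 + 1 by ring, Nat.factorial_succ, Nat.factorial_succ]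
    push_cast; ring
  have hpow : (2 : ℝ) ^ (2 * (k + 1)) = 4 * 2 ^ (2 * k) := by
    rw [mul_add, pow_add]; ring
  unfold invSqrtCoeff
  rw [hfact, hpow, Nat.factorial_succ]
  push_cast
  field_simp
  ring

end invSqrtCoeff

lemma two_mul_sum_antidiagonal_fst_mul (f : ℕ → ℝ) (n : ℕ) :
    2 * ∑ p ∈ antidiagonal n, (p.1 : ℝ) * (f p.1 * f p.2)
      = n * ∑ p ∈ antidiagonal n, f p.1 * f p.2 := by
  have hswap : ∑ p ∈ antidiagonal n, (p.1 : ℝ) * (f p.1 * f p.2)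
      = ∑ p ∈ antidiagonal n, (p.2 : ℝ) * (f p.1 * f p.2) := by
    rw [← Nat.sum_antidiagonal_swap]
    exact sum_congr rfl fun p _ => by simp only [Prod.fst_swap, Prod.snd_swap]; ring
  rw [two_mul, Finset.mul_sum]
  nth_rewrite 2 [hswap]
  rw [← sum_add_distrib]
  refine sum_congr rfl fun p hp => ?_
  rw [← add_mul, ← Nat.cast_add, mem_antidiagonal.mp hp]

lemma sum_antidiagonal_invSqrtCoeff_mul (n : ℕ) :
    ∑ p ∈ antidiagonal n, invSqrtCoeff p.1 * invSqrtCoeff p.2 = 1 := by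
  induction n with
  | zero => simp
  | succ n ih =>
    set c := invSqrtCoeff
    -- The recurrence gives `2 W (n+1) = 2 W n + S n` for the first-index-weighted sums `W`,
    -- and symmetry gives `2 W n = n S n`; hence `(n+1) S (n+1) = (n+1) S n`.
    have hshift : 2 * ∑ p ∈ antidiagonal (n + 1), (p.1 : ℝ) * (c p.1 * c p.2)
        = 2 * ∑ p ∈ antidiagonal n, (p.1 : ℝ) * (c p.1 * c p.2)
          + ∑ p ∈ antidiagonal n, c p.1 * c p.2 := by
      rw [Nat.sum_antidiagonal_succ]
      simp only [Nat.cast_zero, zero_mul, zero_add, Nat.cast_succ]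
      rw [Finset.mul_sum, Finset.mul_sum, ← sum_add_distrib]
      refine sum_congr rfl fun p _ => ?_
      linear_combination c p.2 * invSqrtCoeff.two_mul_succ_mul_succ p.1
    rw [two_mul_sum_antidiagonal_fst_mul, two_mul_sum_antidiagonal_fst_mul, ih] at hshift
    push_cast at hshift
    have hn : ((n : ℝ) + 1) ≠ 0 := by positivity
    exact mul_left_cancel₀ hn (by linear_combination hshift)

lemma sq_sum_range_le_sum_range_sum_antidiagonal {a : ℕ → ℝ} (ha : ∀ k, 0 ≤ a k) (N : ℕ) :
    (∑ k ∈ range N, a k) ^ 2 ≤ ∑ m ∈ range (2 * N), ∑ p ∈ antidiagonal m, a p.1 * a p.2 := by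
  have hmaps : ∀ p ∈ range N ×ˢ range N, p.1 + p.2 ∈ range (2 * N) := by
    intro p hp
    simp only [mem_product, mem_range] at hp ⊢
    omega
  rw [sq, sum_mul_sum, ← sum_product', ← sum_fiberwise_of_maps_to hmaps]
  refine sum_le_sum fun m _ => sum_le_sum_of_subset_of_nonneg ?_ fun p _ _ => ?_
  · intro p hp
    exact mem_antidiagonal.mpr (mem_filter.mp hp).2
  · exact mul_nonneg (ha _) (ha _)

lemma one_sub_mul_sq_sum_invSqrtCoeff_lt_one {t : ℝ} (ht₀ : 0 < t) (ht₁ : t < 1) (N : ℕ) :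
    (1 - t) * (∑ k ∈ range N, invSqrtCoeff k * t ^ k) ^ 2 < 1 := by
  have hconv : ∀ m, ∑ p ∈ antidiagonal m,
      invSqrtCoeff p.1 * t ^ p.1 * (invSqrtCoeff p.2 * t ^ p.2) = t ^ m := by
    intro m
    rw [← mul_one (t ^ m), ← sum_antidiagonal_invSqrtCoeff_mul m, Finset.mul_sum]
    refine sum_congr rfl fun p hp => ?_
    rw [← mem_antidiagonal.mp hp, pow_add]
    ring
  have hsq := sq_sum_range_le_sum_range_sum_antidiagonal
    (fun k => mul_nonneg (invSqrtCoeff.pos k).le (pow_nonneg ht₀.le k)) N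
  simp only [hconv] at hsq
  calc (1 - t) * (∑ k ∈ range N, invSqrtCoeff k * t ^ k) ^ 2
      ≤ (1 - t) * ∑ m ∈ range (2 * N), t ^ m := by gcongr
    _ = 1 - t ^ (2 * N) := by rw [mul_comm, geom_sum_mul_neg]
    _ < 1 := by linarith [pow_pos ht₀ (2 * N)]

lemma two_sqrt_mul_div_add_eq_sqrt_one_sub_sq {x y : ℝ} (hx : 0 ≤ x) (hy : 0 ≤ y)
    (hxy : 0 < x + y) :
    2 * Real.sqrt (x * y) / (x + y) = Real.sqrt (1 - ((x - y) / (x + y)) ^ 2) := by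
  have h : 1 - ((x - y) / (x + y)) ^ 2 = (2 * Real.sqrt (x * y) / (x + y)) ^ 2 := by
    rw [div_pow, div_pow, mul_pow, Real.sq_sqrt (mul_nonneg hx hy)]
    field_simp
    ring
  rw [h, Real.sqrt_sq (by positivity)]

lemma sq_div_add_lt_one {x y : ℝ} (hx : 0 < x) (hy : 0 < y) :
    ((x - y) / (x + y)) ^ 2 < 1 := by
  have hxy : 0 < x + y := by linarith
  rw [sq_lt_one_iff_abs_lt_one, abs_div, abs_of_pos hxy, div_lt_one hxy, abs_lt]
  constructor <;> linarith

theorem stmt5_general (N : ℕ) (x₀ : ℝ) (hx₀ : 0 < x₀)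
    (η : ℝ → ℝ)
    (hη : ∀ x, η x = (2 * Real.sqrt (x * x₀) / (x + x₀)) *
      ∑ k ∈ Finset.range N,
        ((Nat.factorial (2 * k) : ℝ) / (2 ^ (2 * k) * (Nat.factorial k : ℝ) ^ 2)) *
          ((x - x₀) / (x + x₀)) ^ (2 * k)) :
    ∀ x : ℝ, 0 < x → x ≠ x₀ → |η x| < 1 := by
  intro x hx hne
  set t := ((x - x₀) / (x + x₀)) ^ 2
  have ht₀ : 0 < t := by
    have : x - x₀ ≠ 0 := sub_ne_zero.mpr hne
    positivity
  have ht₁ : t < 1 := sq_div_add_lt_one hx hx₀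
  have hηx : η x = Real.sqrt (1 - t) * ∑ k ∈ range N, invSqrtCoeff k * t ^ k := by
    simp only [hη, two_sqrt_mul_div_add_eq_sqrt_one_sub_sq hx.le hx₀.le (by linarith), pow_mul,
      invSqrtCoeff, t]
  have hnonneg : 0 ≤ Real.sqrt (1 - t) * ∑ k ∈ range N, invSqrtCoeff k * t ^ k :=
    mul_nonneg (Real.sqrt_nonneg _)
      (sum_nonneg fun k _ => mul_nonneg (invSqrtCoeff.pos k).le (pow_nonneg ht₀.le k))
  rw [hηx, abs_of_nonneg hnonneg, ← sq_lt_one_iff₀ hnonneg, mul_pow,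
    Real.sq_sqrt (by linarith)]
  exact one_sub_mul_sq_sum_invSqrtCoeff_lt_one ht₀ ht₁ N

/-- Strict bound `|η(x)| < 1` for `x ≠ x₀` for the normalized Laplace precertificate. -/
theorem stmt5 (N : ℕ) (hN : 0 < N) (x₀ : ℝ) (hx₀ : 0 < x₀)
    (η : ℝ → ℝ)
    (hη : ∀ x, η x = (2 * Real.sqrt (x * x₀) / (x + x₀)) *
      ∑ k ∈ Finset.range N,
        ((Nat.factorial (2 * k) : ℝ) / (2 ^ (2 * k) * (Nat.factorial k : ℝ) ^ 2)) *
          ((x - x₀) / (x + x₀)) ^ (2 * k)) :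
    ∀ x : ℝ, 0 < x → x ≠ x₀ → |η x| < 1 :=
  stmt5_general N x₀ hx₀ η hη
end

section
/- Let x₀ > 0, t₀ = 1/(2x₀), and g(t) = 1/√(t − t² x₀) for t ∈ (0, 1/x₀). Then g^{(2N)}(t₀)/g(t₀) = ((2N)!)²/(N!)² · x₀^{2N}. -/
/-!
With `t = t₀ + y` one has `t - t²x₀ = (1 - (2x₀y)²) / (4x₀)`, so
`g (t₀ + y) = 2√x₀ · (1 - (2x₀y)²)^(-1/2)`. The binomial series
`(1 - w)^(-1/2) = ∑ C(2n, n) / 4ⁿ · wⁿ` therefore gives the Taylor expansion of `g` at `t₀`: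
its coefficient of `y^(2N)` is `2√x₀ · C(2N, N) · x₀^(2N)`, and `g^(2N)(t₀)` is `(2N)!` times it.
-/

open scoped Nat ENNReal NNReal
open FormalMultilinearSeries

theorem Nat.centralBinom_mul_factorial_sq (n : ℕ) : n.centralBinom * n ! ^ 2 = (2 * n)! := by
  have h := Nat.choose_mul_factorial_mul_factorial (Nat.le_add_left n n)
  rwa [Nat.add_sub_cancel, mul_assoc, ← sq, ← two_mul] at h

theorem Ring.multichoose_one_half (n : ℕ) :
    Ring.multichoose (1 / 2 : ℝ) n = n.centralBinom / 4 ^ n := by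
  have hpoch : (n ! : ℝ) * (n.centralBinom / 4 ^ n) = (ascPochhammer ℝ n).eval (1 / 2) := by
    induction n with
    | zero => simp
    | succ n ih =>
      have hrec : ((n : ℝ) + 1) * (n + 1).centralBinom = 2 * (2 * n + 1) * n.centralBinom := by
        exact_mod_cast Nat.succ_mul_centralBinom_succ n
      rw [ascPochhammer_succ_eval, ← ih, Nat.factorial_succ, pow_succ]
      push_cast
      linear_combination (n ! : ℝ) / (4 ^ n * 4) * hrec
  refine (mul_right_inj' (Nat.cast_ne_zero.2 n.factorial_ne_zero)).1 ?_
  rw [hpoch, ← nsmul_eq_mul, factorial_nsmul_multichoose_eq_ascPochhammer,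
    Polynomial.ascPochhammer_smeval_eq_eval]

theorem Real.hasFPowerSeriesOnBall_one_div_sqrt_one_sub :
    HasFPowerSeriesOnBall (fun w ↦ 1 / √(1 - w))
      (ofScalars ℝ fun n ↦ (n.centralBinom / 4 ^ n : ℝ)) 0 1 := by
  have h := Real.one_div_one_sub_rpow_hasFPowerSeriesOnBall_zero (1 / 2)
  simp only [← Ring.multichoose_eq, Ring.multichoose_one_half] at h
  refine h.congr fun w _ ↦ ?_
  simp [Real.sqrt_eq_rpow]

section OfScalars

variable {𝕜 : Type*} [NontriviallyNormedField 𝕜] {f : 𝕜 → 𝕜} {a : ℕ → 𝕜} {r : ℝ≥0∞}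

theorem FormalMultilinearSeries.le_radius_ofScalars_even (h : r ^ 2 ≤ (ofScalars 𝕜 a).radius) :
    r ≤ (ofScalars 𝕜 fun k ↦ if Even k then a (k / 2) else 0).radius := by
  refine ENNReal.le_of_forall_nnreal_lt fun ρ hρ ↦ ?_
  have hρ2 : ((ρ ^ 2 : ℝ≥0) : ℝ≥0∞) < (ofScalars 𝕜 a).radius := by
    push_cast
    exact ((ENNReal.pow_lt_pow_left_iff two_ne_zero).2 hρ).trans_le h
  obtain ⟨C, hC0, hC⟩ := (ofScalars 𝕜 a).norm_mul_pow_le_of_lt_radius hρ2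
  refine le_radius_of_bound _ C fun k ↦ ?_
  rw [ofScalars_norm]
  split_ifs with hk
  · obtain ⟨m, rfl⟩ := hk
    have hm := hC m
    rw [ofScalars_norm, NNReal.coe_pow, ← pow_mul] at hm
    rwa [← two_mul, Nat.mul_div_cancel_left m two_pos]
  · simpa using hC0.le

theorem HasFPowerSeriesOnBall.comp_sq (hf : HasFPowerSeriesOnBall f (ofScalars 𝕜 a) 0 (r ^ 2)) :
    HasFPowerSeriesOnBall (fun y ↦ f (y ^ 2))
      (ofScalars 𝕜 fun k ↦ if Even k then a (k / 2) else 0) 0 r where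
  r_le := le_radius_ofScalars_even hf.r_le
  r_pos := by
    refine pos_iff_ne_zero.2 fun hr ↦ ?_
    simpa [hr] using hf.r_pos
  hasSum {y} hy := by
    have hy2 : y ^ 2 ∈ Metric.eball (0 : 𝕜) (r ^ 2) := by
      simpa [enorm_pow] using (ENNReal.pow_lt_pow_left_iff two_ne_zero).2 (by simpa using hy)
    have hsum := hf.hasSum hy2
    simp only [zero_add, ofScalars_apply_eq] at hsum ⊢
    refine ((mul_right_injective₀ two_ne_zero).hasSum_iff fun k hk ↦ ?_).1 ?_
    · rw [if_neg fun ⟨m, hm⟩ ↦ hk ⟨m, by simp [hm, two_mul]⟩, zero_smul]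
    · convert hsum using 2 with m
      simp [pow_mul]

theorem HasFPowerSeriesOnBall.comp_const_mul (hf : HasFPowerSeriesOnBall f (ofScalars 𝕜 a) 0 r)
    (c : 𝕜) :
    HasFPowerSeriesOnBall (fun y ↦ f (c * y)) (ofScalars 𝕜 fun n ↦ c ^ n * a n) 0 (r / ‖c‖ₑ) := by
  have hu := ((ContinuousLinearMap.mul 𝕜 𝕜 c).map_zero ▸ hf).compContinuousLinearMap (x := 0)
  have hnorm : ‖ContinuousLinearMap.mul 𝕜 𝕜 c‖ₑ = ‖c‖ₑ := by
    simp [enorm_eq_nnnorm, ContinuousLinearMap.opNNNorm_mul_apply]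
  have hseries : (ofScalars 𝕜 a).compContinuousLinearMap (ContinuousLinearMap.mul 𝕜 𝕜 c) =
      ofScalars 𝕜 fun n ↦ c ^ n * a n := by
    ext n
    simp only [compContinuousLinearMap_apply, Function.comp_def,
      ContinuousLinearMap.mul_apply', mul_one, ofScalars_apply_eq, one_pow, smul_eq_mul, mul_comm]
  rw [hnorm, hseries] at hu
  exact hu

theorem HasFPowerSeriesOnBall.iteratedDeriv_eq_factorial_mul [CompleteSpace 𝕜] {x : 𝕜}
    (hf : HasFPowerSeriesOnBall f (ofScalars 𝕜 a) x r) (n : ℕ) :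
    iteratedDeriv n f x = n ! * a n := by
  simp [iteratedDeriv_eq_iteratedFDeriv, ← hf.factorial_smul]

end OfScalars

-- Holds for every `t`: where the radicand is negative both sides are `1 / 0 = 0`.
theorem one_div_sqrt_sub_sq_mul_eq {x₀ : ℝ} (hx₀ : 0 < x₀) (t : ℝ) :
    1 / √(t - t ^ 2 * x₀) = 2 * √x₀ * (1 / √(1 - (2 * x₀ * (t - 1 / (2 * x₀))) ^ 2)) := by
  have harg : t - t ^ 2 * x₀ = (1 - (2 * x₀ * (t - 1 / (2 * x₀))) ^ 2) / (2 * √x₀) ^ 2 := by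
    rw [mul_pow 2 √x₀, Real.sq_sqrt hx₀.le]
    field_simp
    ring
  rw [harg, Real.sqrt_div' _ (sq_nonneg _), Real.sqrt_sq (by positivity), one_div_div, mul_one_div]

theorem stmt7_general (N : ℕ) (x₀ : ℝ) (hx₀ : 0 < x₀)
    (g : ℝ → ℝ) (hg : ∀ t, g t = 1 / Real.sqrt (t - t ^ 2 * x₀))
    (t₀ : ℝ) (ht₀ : t₀ = 1 / (2 * x₀)) :
    iteratedDerivWithin (2 * N) g (Set.Ioo 0 (1 / x₀)) t₀ / g t₀ =
      (Nat.factorial (2 * N) : ℝ) ^ 2 / (Nat.factorial N : ℝ) ^ 2 * x₀ ^ (2 * N) := by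
  have ht₀_mem : t₀ ∈ Set.Ioo 0 (1 / x₀) := by
    rw [ht₀]
    exact ⟨by positivity, one_div_lt_one_div_of_lt hx₀ (by linarith)⟩
  have hg_eq : g = (2 * √x₀) • fun t ↦ 1 / √(1 - (2 * x₀ * (t - t₀)) ^ 2) := by
    funext t
    rw [hg, ht₀, one_div_sqrt_sub_sq_mul_eq hx₀]
    rfl
  have hsqrt : HasFPowerSeriesOnBall (fun w ↦ 1 / √(1 - w))
      (ofScalars ℝ fun n ↦ (n.centralBinom / 4 ^ n : ℝ)) 0 (1 ^ 2) := by
    simpa using Real.hasFPowerSeriesOnBall_one_div_sqrt_one_sub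
  have hps := ((hsqrt.comp_sq.comp_const_mul (2 * x₀)).comp_sub t₀).const_smul (c := 2 * √x₀)
  rw [zero_add, ← ofScalars_smul, ← hg_eq] at hps
  have hg_t₀ : g t₀ = 2 * √x₀ := by simp [hg_eq]
  have hcb : (N.centralBinom : ℝ) * (N ! : ℝ) ^ 2 = ((2 * N)! : ℝ) := by
    exact_mod_cast N.centralBinom_mul_factorial_sq
  rw [iteratedDerivWithin_of_isOpen isOpen_Ioo ht₀_mem, hps.iteratedDeriv_eq_factorial_mul, hg_t₀,
    Pi.smul_apply, smul_eq_mul, if_pos (even_two_mul N), Nat.mul_div_cancel_left N two_pos,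
    mul_pow, pow_mul, ← hcb]
  field_simp
  norm_num

/-- For `g(t) = 1/√(t - t²x₀)` on `(0, 1/x₀)` and `t₀ = 1/(2x₀)`,
`g^{(2N)}(t₀)/g(t₀) = ((2N)!)²/(N!)² · x₀^{2N}`. -/
theorem stmt7 (N : ℕ) (hN : 0 < N) (x₀ : ℝ) (hx₀ : 0 < x₀)
    (g : ℝ → ℝ) (hg : ∀ t, g t = 1 / Real.sqrt (t - t ^ 2 * x₀))
    (t₀ : ℝ) (ht₀ : t₀ = 1 / (2 * x₀)) :
    iteratedDerivWithin (2 * N) g (Set.Ioo 0 (1 / x₀)) t₀ / g t₀ =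
      (Nat.factorial (2 * N) : ℝ) ^ 2 / (Nat.factorial N : ℝ) ^ 2 * x₀ ^ (2 * N) :=
  stmt7_general N x₀ hx₀ g hg t₀ ht₀
end

section
/- Let x₀ > 0, N ∈ ℕ*, c_k = (2k)!/(2^{2k}(k!)²), and z(x) = (x−x₀)/(x+x₀). Then the function η(x) = √(1−z(x)²) · Σ_{k=0}^{N−1} c_k z(x)^{2k} satisfies, for every x > 0 with x ≠ x₀: η(x) = 1 − (Σ_{k=N}^∞ c_k z(x)^{2k})/(Σ_{k=0}^∞ c_k z(x)^{2k}), and hence 0 < η(x) < 1. -/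
section aux

variable (C : ℕ → ℝ)

/-- symmetry of the convolution sum -/
lemma aux_sym (m : ℕ) :
    2 * ∑ k ∈ Finset.range (m + 1), (k : ℝ) * (C k * C (m - k)) =
      (m : ℝ) * ∑ k ∈ Finset.range (m + 1), C k * C (m - k) := by
  have hrefl := Finset.sum_range_reflect (fun k => (k : ℝ) * (C k * C (m - k))) (m + 1)
  have h1 : ∑ k ∈ Finset.range (m + 1), ((m - k : ℕ) : ℝ) * (C (m - k) * C k) =
      ∑ k ∈ Finset.range (m + 1), (k : ℝ) * (C k * C (m - k)) := by
    rw [← hrefl]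
    apply Finset.sum_congr rfl
    intro k hk
    have hk' : k ≤ m := Nat.lt_succ_iff.mp (Finset.mem_range.mp hk)
    have : m + 1 - 1 - k = m - k := by omega
    rw [this]
    have : m - (m - k) = k := by omega
    rw [this]
  calc 2 * ∑ k ∈ Finset.range (m + 1), (k : ℝ) * (C k * C (m - k))
      = (∑ k ∈ Finset.range (m + 1), (k : ℝ) * (C k * C (m - k))) +
        ∑ k ∈ Finset.range (m + 1), ((m - k : ℕ) : ℝ) * (C (m - k) * C k) := by
        rw [h1]; ring
    _ = ∑ k ∈ Finset.range (m + 1), ((k : ℝ) + ((m - k : ℕ) : ℝ)) * (C k * C (m - k)) := by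
        rw [← Finset.sum_add_distrib]
        apply Finset.sum_congr rfl
        intro k _
        ring
    _ = (m : ℝ) * ∑ k ∈ Finset.range (m + 1), C k * C (m - k) := by
        rw [Finset.mul_sum]
        apply Finset.sum_congr rfl
        intro k hk
        have hk' : k ≤ m := Nat.lt_succ_iff.mp (Finset.mem_range.mp hk)
        have : ((m - k : ℕ) : ℝ) = (m : ℝ) - (k : ℝ) := by
          rw [Nat.cast_sub hk']
        rw [this]; ring

/-- Convolution identity: `∑_{k≤n} C k C (n-k) = 1` for the normalized
central binomial coefficients. -/
lemma aux_conv (h0 : C 0 = 1)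
    (hrec : ∀ k : ℕ, 2 * ((k : ℝ) + 1) * C (k + 1) = (2 * k + 1) * C k) (n : ℕ) :
    ∑ k ∈ Finset.range (n + 1), C k * C (n - k) = 1 := by
  induction n with
  | zero => simp [h0]
  | succ m ih =>
    have key : ((m : ℝ) + 1) * ∑ k ∈ Finset.range (m + 2), C k * C (m + 1 - k) =
        ((m : ℝ) + 1) * ∑ k ∈ Finset.range (m + 1), C k * C (m - k) := by
      have hs1 := aux_sym C (m + 1)
      have hs2 := aux_sym C m
      -- shift: ∑_{k=0}^{m+1} k C_k C_{m+1-k} = ∑_{j=0}^{m} (j+1) C_{j+1} C_{m-j}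
      have hshift : ∑ k ∈ Finset.range (m + 2), (k : ℝ) * (C k * C (m + 1 - k)) =
          ∑ j ∈ Finset.range (m + 1), ((j : ℝ) + 1) * (C (j + 1) * C (m - j)) := by
        rw [Finset.sum_range_succ' (fun k => (k : ℝ) * (C k * C (m + 1 - k))) (m + 1)]
        simp only [Nat.cast_zero, zero_mul, add_zero]
        apply Finset.sum_congr rfl
        intro j hj
        have : m + 1 - (j + 1) = m - j := by omega
        rw [this]
        push_cast
        ring
      -- apply the recurrence
      have hrec' : ∑ j ∈ Finset.range (m + 1), ((j : ℝ) + 1) * (C (j + 1) * C (m - j)) =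
          ∑ j ∈ Finset.range (m + 1),
            ((j : ℝ) + 1 / 2) * (C j * C (m - j)) := by
        apply Finset.sum_congr rfl
        intro j _
        have h := hrec j
        linear_combination (C (m - j) / 2) * h
      have hsplit : ∑ j ∈ Finset.range (m + 1), ((j : ℝ) + 1 / 2) * (C j * C (m - j)) =
          (∑ j ∈ Finset.range (m + 1), (j : ℝ) * (C j * C (m - j))) +
            (1 / 2) * ∑ j ∈ Finset.range (m + 1), C j * C (m - j) := by
        rw [Finset.mul_sum, ← Finset.sum_add_distrib]
        apply Finset.sum_congr rfl
        intro j _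
        ring
      push_cast at hs1
      nlinarith [hs1, hs2, hshift, hrec', hsplit]
    have hm1 : ((m : ℝ) + 1) ≠ 0 := by positivity
    have := mul_left_cancel₀ hm1 key
    rw [this, ih]

lemma aux_pos (h0 : C 0 = 1)
    (hrec : ∀ k : ℕ, 2 * ((k : ℝ) + 1) * C (k + 1) = (2 * k + 1) * C k) (k : ℕ) :
    0 < C k ∧ C k ≤ 1 := by
  induction k with
  | zero => simp [h0]
  | succ n ih =>
    have h := hrec n
    have h2 : C (n + 1) = (2 * n + 1) / (2 * (n + 1)) * C n := by
      field_simp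
      linear_combination h
    constructor
    · rw [h2]
      apply mul_pos (by positivity) ih.1
    · rw [h2]
      have h3 : (2 * (n : ℝ) + 1) / (2 * (n + 1)) ≤ 1 := by
        rw [div_le_one (by positivity)]
        linarith
      nlinarith [ih.1, ih.2, h3, mul_le_mul_of_nonneg_right h3 ih.1.le]

/-- Summability of `C k * t^k` for `0 ≤ t < 1`. -/
lemma aux_summable (h0 : C 0 = 1)
    (hrec : ∀ k : ℕ, 2 * ((k : ℝ) + 1) * C (k + 1) = (2 * k + 1) * C k)
    {t : ℝ} (ht0 : 0 ≤ t) (ht1 : t < 1) :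
    Summable (fun k => C k * t ^ k) := by
  apply Summable.of_nonneg_of_le (fun k => by
      have := (aux_pos C h0 hrec k).1
      positivity)
    (fun k => ?_) (summable_geometric_of_lt_one ht0 ht1)
  have h1 := (aux_pos C h0 hrec k).2
  have h2 : (0:ℝ) ≤ t ^ k := by positivity
  nlinarith

/-- The generating function identity: `∑' C k t^k = 1/√(1-t)` for `0 ≤ t < 1`. -/
lemma aux_tsum (h0 : C 0 = 1)
    (hrec : ∀ k : ℕ, 2 * ((k : ℝ) + 1) * C (k + 1) = (2 * k + 1) * C k)
    {t : ℝ} (ht0 : 0 ≤ t) (ht1 : t < 1) :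
    (∑' k : ℕ, C k * t ^ k) = 1 / Real.sqrt (1 - t) := by
  set f : ℕ → ℝ := fun k => C k * t ^ k with hf
  have hsum : Summable f := aux_summable C h0 hrec ht0 ht1
  have hnonneg : ∀ k, 0 ≤ f k := fun k => by
    have := (aux_pos C h0 hrec k).1
    simp only [hf]; positivity
  have hnorm : Summable (fun k => ‖f k‖) := by
    simpa [Real.norm_of_nonneg (hnonneg _)] using hsum
  have hsq : (∑' k, f k) * (∑' k, f k) = (1 - t)⁻¹ := by
    rw [tsum_mul_tsum_eq_tsum_sum_range_of_summable_norm hnorm hnorm]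
    have : ∀ n : ℕ, ∑ k ∈ Finset.range (n + 1), f k * f (n - k) = t ^ n := by
      intro n
      have : ∑ k ∈ Finset.range (n + 1), f k * f (n - k) =
          (∑ k ∈ Finset.range (n + 1), C k * C (n - k)) * t ^ n := by
        rw [Finset.sum_mul]
        apply Finset.sum_congr rfl
        intro k hk
        have hk' : k ≤ n := Nat.lt_succ_iff.mp (Finset.mem_range.mp hk)
        simp only [hf]
        have hpow : t ^ k * t ^ (n - k) = t ^ n := by
          rw [← pow_add]
          congr 1
          omega
        calc C k * t ^ k * (C (n - k) * t ^ (n - k))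
            = C k * C (n - k) * (t ^ k * t ^ (n - k)) := by ring
          _ = C k * C (n - k) * t ^ n := by rw [hpow]
      rw [this, aux_conv C h0 hrec n, one_mul]
    rw [tsum_congr this, tsum_geometric_of_lt_one ht0 ht1]

  have hS_pos : 0 < ∑' k, f k := by
    apply Summable.tsum_pos hsum hnonneg 0
    simp [hf, h0]
  have h1t : 0 < 1 - t := by linarith
  have hsqrt : Real.sqrt (1 - t) > 0 := Real.sqrt_pos.mpr h1t
  set A := ∑' k, f k
  set B := 1 / Real.sqrt (1 - t) with hB
  have hB_pos : 0 < B := by rw [hB]; positivity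
  have hBB : B * B = (1 - t)⁻¹ := by
    rw [hB, div_mul_div_comm, one_mul, Real.mul_self_sqrt h1t.le, one_div]
  have hfac : (A - B) * (A + B) = 0 := by nlinarith [hsq, hBB]
  rcases mul_eq_zero.mp hfac with h | h
  · linarith [sub_eq_zero.mp h]
  · linarith

end aux

/-- Key identity and strict bounds for the normalized Laplace precertificate:
with `c_k = (2k)!/(2^{2k}(k!)²)` and `z(x) = (x-x₀)/(x+x₀)`, the function
`η(x) = √(1-z²) Σ_{k<N} c_k z^{2k}` satisfies, for `x > 0`, `x ≠ x₀`,
`η(x) = 1 - (Σ_{k≥N} c_k z^{2k})/(Σ_{k≥0} c_k z^{2k})` and `0 < η(x) < 1`. -/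
theorem stmt18 (N : ℕ) (hN : 0 < N) (x₀ : ℝ) (hx₀ : 0 < x₀)
    (c : ℕ → ℝ)
    (hc : ∀ k, c k = (Nat.factorial (2 * k) : ℝ) / (2 ^ (2 * k) * (Nat.factorial k : ℝ) ^ 2))
    (z : ℝ → ℝ) (hz : ∀ x, z x = (x - x₀) / (x + x₀))
    (η : ℝ → ℝ)
    (hη : ∀ x, η x = Real.sqrt (1 - z x ^ 2) *
      ∑ k ∈ Finset.range N, c k * z x ^ (2 * k)) :
    ∀ x : ℝ, 0 < x → x ≠ x₀ →
      η x = 1 - (∑' k : ℕ, c (N + k) * z x ^ (2 * (N + k))) /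
        (∑' k : ℕ, c k * z x ^ (2 * k)) ∧
      0 < η x ∧ η x < 1 := by
  -- basic facts about c
  have h0 : c 0 = 1 := by simp [hc 0, Nat.factorial]
  have hrec : ∀ k : ℕ, 2 * ((k : ℝ) + 1) * c (k + 1) = (2 * k + 1) * c k := by
    intro k
    rw [hc k, hc (k + 1)]
    have e1 : 2 * (k + 1) = 2 * k + 1 + 1 := by ring
    rw [e1, Nat.factorial_succ, Nat.factorial_succ, Nat.factorial_succ]
    have hfk : (0:ℝ) < (Nat.factorial k : ℝ) := by positivity
    have hfk2 : (0:ℝ) < (Nat.factorial (2 * k) : ℝ) := by positivity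
    have hp : (0:ℝ) < (2:ℝ) ^ (2 * k) := by positivity
    push_cast
    field_simp
    ring
  intro x hx hxne
  -- properties of z
  have hxx₀ : 0 < x + x₀ := by linarith
  have hz1 : |z x| < 1 := by
    rw [hz x, abs_div, abs_of_pos hxx₀, div_lt_one hxx₀, abs_sub_lt_iff]
    constructor <;> linarith
  have hzne : z x ≠ 0 := by
    rw [hz x]
    apply div_ne_zero _ (ne_of_gt hxx₀)
    exact sub_ne_zero.mpr hxne
  set t : ℝ := z x ^ 2 with htdef
  have ht0 : 0 < t := by positivity
  have ht1 : t < 1 := by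
    have := (sq_lt_one_iff_abs_lt_one (a := z x)).mpr hz1
    simpa [htdef] using this
  have hzt : ∀ k : ℕ, z x ^ (2 * k) = t ^ k := fun k => by
    rw [htdef, ← pow_mul]
  -- summability and tsum value
  have hsum : Summable (fun k => c k * t ^ k) := aux_summable c h0 hrec ht0.le ht1
  have hS : (∑' k : ℕ, c k * t ^ k) = 1 / Real.sqrt (1 - t) :=
    aux_tsum c h0 hrec ht0.le ht1
  have h1t : 0 < 1 - t := by linarith
  have hsqrt : 0 < Real.sqrt (1 - t) := Real.sqrt_pos.mpr h1t
  have hS_pos : 0 < ∑' k : ℕ, c k * t ^ k := by rw [hS]; positivity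
  -- rewrite the tsums in the goal
  have hgoal1 : (∑' k : ℕ, c k * z x ^ (2 * k)) = ∑' k : ℕ, c k * t ^ k :=
    tsum_congr fun k => by rw [hzt k]
  have hgoal2 : (∑' k : ℕ, c (N + k) * z x ^ (2 * (N + k))) =
      ∑' k : ℕ, c (N + k) * t ^ (N + k) :=
    tsum_congr fun k => by rw [hzt (N + k)]
  -- tail identity
  have htail : (∑ k ∈ Finset.range N, c k * t ^ k) +
      (∑' k : ℕ, c (N + k) * t ^ (N + k)) = ∑' k : ℕ, c k * t ^ k := by
    have := Summable.sum_add_tsum_nat_add (f := fun k => c k * t ^ k) N hsum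
    simpa [add_comm] using this
  set P : ℝ := ∑ k ∈ Finset.range N, c k * t ^ k with hPdef
  have hP_pos : 0 < P := by
    rw [hPdef]
    apply Finset.sum_pos
    · intro k _
      have := (aux_pos c h0 hrec k).1
      positivity
    · exact ⟨0, Finset.mem_range.mpr hN⟩
  -- tail positivity
  have htail_pos : 0 < ∑' k : ℕ, c (N + k) * t ^ (N + k) := by
    refine Summable.tsum_pos ?_ ?_ 0 ?_
    · exact ((summable_nat_add_iff N).mpr hsum).congr (fun k => by rw [add_comm k N])
    · intro k
      have := (aux_pos c h0 hrec (N + k)).1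
      positivity
    · have := (aux_pos c h0 hrec (N + 0)).1
      positivity
  -- eta value
  have hηx : η x = Real.sqrt (1 - t) * P := by
    rw [hη x, hPdef]
    congr 1
    apply Finset.sum_congr rfl
    intro k _
    rw [hzt k]
  set S : ℝ := ∑' k : ℕ, c k * t ^ k with hSdef
  set T : ℝ := ∑' k : ℕ, c (N + k) * t ^ (N + k) with hTdef
  have hPTS : P + T = S := htail
  have hident : η x = 1 - T / S := by
    rw [hηx]
    have hSval : S = 1 / Real.sqrt (1 - t) := hS
    have : Real.sqrt (1 - t) = 1 / S := by
      rw [hSval]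
      field_simp
    rw [this]
    field_simp
    linarith [hPTS]
  refine ⟨by rw [hgoal1, hgoal2]; exact hident, ?_, ?_⟩
  · rw [hηx]; positivity
  · rw [hident]
    have : 0 < T / S := div_pos htail_pos hS_pos
    linarith
end
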